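/- arXiv:1302.1860 — 2 statements merged into one kernel-verified Lean document; each statement's English description precedes it below -/
import Mathlib

section
/- Let Δ_σ(Z) = (4π)^{-D/2} · Γ(−σ)Γ(σ+D−1)/Γ(D/2) · ₂F₁(−σ, σ+D−1; D/2; (1+Z)/2) and M²(σ) = −σ(σ+D−1). Then as M² → 0 (i.e. σ → 0), Δ_σ(Z) = 1/(M² vol(S^D)) + O(M⁰), where vol(S^D) = 2π^{(D+1)/2}/Γ((D+1)/2); in particular M²Δ_σ(Z) → 1/vol(S^D) as σ → 0, uniformly for Z in compact subsets of ℂ∖[1,∞). -/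
open Complex

/-- The Gauss hypergeometric series `₂F₁(a,b;c;z) = Σ (a)ₙ(b)ₙ/((c)ₙ n!) zⁿ`. -/
noncomputable def hyperSeries (a b c z : ℂ) : ℂ :=
  ∑' n : ℕ, ((ascPochhammer ℂ n).eval a * (ascPochhammer ℂ n).eval b) /
    ((ascPochhammer ℂ n).eval c * (Nat.factorial n : ℂ)) * z ^ n

/-- The complex plane cut along `[1,∞)`. -/
def cutPlane : Set ℂ := {z : ℂ | ¬(z.im = 0 ∧ 1 ≤ z.re)}

/-- `vol(S^D) = 2π^{(D+1)/2}/Γ((D+1)/2)`. -/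
noncomputable def volS (D : ℕ) : ℝ :=
  2 * Real.pi ^ (((D : ℝ) + 1) / 2) / Real.Gamma (((D : ℝ) + 1) / 2)

/-- `Δ_σ(Z) = (4π)^{-D/2} Γ(−σ)Γ(σ+D−1)/Γ(D/2) · F(σ,Z)`, where `F` is the analytic
continuation of `₂F₁(−σ, σ+D−1; D/2; (1+Z)/2)` to the cut plane. -/
noncomputable def DeltaKG (D : ℕ) (F : ℂ → ℂ → ℂ) (σ z : ℂ) : ℂ :=
  (4 * (Real.pi : ℂ)) ^ (-(D : ℂ) / 2) *
    (Complex.Gamma (-σ) * Complex.Gamma (σ + (D : ℂ) - 1) / Complex.Gamma ((D : ℂ) / 2)) *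
    F σ z

/-!
Because `Γ(1 - σ) = -σ Γ(-σ)` and `Γ(σ + D) = (σ + D - 1) Γ(σ + D - 1)`, the product
`M²(σ) Δ_σ(Z)` equals `(4π)^{-D/2} Γ(1 - σ) Γ(σ + D) / Γ(D/2) · F(σ, Z)`, which is jointly
continuous near `σ = 0`; on a compact set of `Z` it therefore converges uniformly to its value at
`σ = 0`. There `₂F₁(0, b; c; w) = 1`, so the identity theorem on the connected cut plane gives
`F(0, ·) = 1`, and Legendre's duplication formula turns `(4π)^{-D/2} Γ(D) / Γ(D/2)` into
`1 / vol(S^D)`.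
-/

open Filter Topology

lemma hyperSeries_zero_left (b c w : ℂ) : hyperSeries 0 b c w = 1 := by
  rw [hyperSeries, tsum_eq_single 0 fun n hn => by simp [hn]]
  simp

lemma cutPlane_eq_preimage_slitPlane : cutPlane = (Homeomorph.subLeft (1 : ℂ)) ⁻¹' slitPlane := by
  ext z
  simp [cutPlane, mem_slitPlane_iff, imp_iff_not_or, or_comm]

lemma isOpen_cutPlane : IsOpen cutPlane := by
  rw [cutPlane_eq_preimage_slitPlane]
  exact isOpen_slitPlane.preimage (Homeomorph.subLeft _).continuous

lemma isPreconnected_cutPlane : IsPreconnected cutPlane := by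
  rw [cutPlane_eq_preimage_slitPlane, Homeomorph.isPreconnected_preimage]
  exact (starConvex_one_slitPlane.isPathConnected one_mem_slitPlane).isConnected.isPreconnected

lemma zero_mem_cutPlane : (0 : ℂ) ∈ cutPlane := by
  simp [cutPlane]

lemma eqOn_one_of_eq_hyperSeries_zero_left {f : ℂ → ℂ} {b c : ℂ}
    (hf : DifferentiableOn ℂ f cutPlane)
    (hser : ∀ z : ℂ, ‖(1 + z) / 2‖ < 1 → f z = hyperSeries 0 b c ((1 + z) / 2)) :
    Set.EqOn f 1 cutPlane := by
  have hdisk : ∀ᶠ z in 𝓝 (0 : ℂ), ‖(1 + z) / 2‖ < 1 :=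
    (by fun_prop : Continuous fun z : ℂ => ‖(1 + z) / 2‖).continuousAt.eventually_lt
      continuousAt_const (by norm_num)
  have hnear : f =ᶠ[𝓝 0] 1 := by
    filter_upwards [hdisk] with z hz
    rw [hser z hz, hyperSeries_zero_left, Pi.one_apply]
  exact (hf.analyticOnNhd isOpen_cutPlane).eqOn_of_preconnected_of_eventuallyEq
    analyticOnNhd_const isPreconnected_cutPlane zero_mem_cutPlane hnear

lemma four_pi_rpow_neg_half_mul_Gamma_div {x : ℝ} (hx : 0 < x) :
    (4 * Real.pi) ^ (-x / 2) * (Real.Gamma x / Real.Gamma (x / 2)) =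
      Real.Gamma ((x + 1) / 2) / (2 * Real.pi ^ ((x + 1) / 2)) := by
  have hπ := Real.pi_pos
  have hduplication := Real.Gamma_mul_Gamma_add_half (x / 2)
  have htwo : (2 : ℝ) ^ (1 - x) = 2 / 2 ^ x := by
    rw [Real.rpow_sub two_pos, Real.rpow_one]
  rw [show x / 2 + 1 / 2 = (x + 1) / 2 by ring, show 2 * (x / 2) = x by ring, htwo] at hduplication
  have hfour : (4 * Real.pi) ^ (-x / 2) = ((2 : ℝ) ^ x * Real.pi ^ (x / 2))⁻¹ := by
    rw [neg_div, Real.rpow_neg (by positivity), Real.mul_rpow (by norm_num) hπ.le,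
      show (4 : ℝ) = 2 ^ (2 : ℝ) by norm_num, ← Real.rpow_mul (by norm_num)]
    ring_nf
  have hpi : Real.pi ^ ((x + 1) / 2) = Real.pi ^ (x / 2) * √Real.pi := by
    rw [add_div, Real.rpow_add hπ, Real.sqrt_eq_rpow]
  have : 0 < Real.Gamma (x / 2) := Real.Gamma_pos_of_pos (by positivity)
  have : 0 < Real.pi ^ (x / 2) := by positivity
  have : 0 < (2 : ℝ) ^ x := by positivity
  have : 0 < √Real.pi := by positivity
  rw [hfour, hpi]
  field_simp at hduplication ⊢
  linear_combination -hduplication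

lemma inv_volS_eq {D : ℕ} (hD : 0 < D) :
    (((volS D)⁻¹ : ℝ) : ℂ) = (4 * (Real.pi : ℂ)) ^ (-(D : ℂ) / 2) *
      (Complex.Gamma D / Complex.Gamma ((D : ℂ) / 2)) := by
  rw [volS, inv_div, ← four_pi_rpow_neg_half_mul_Gamma_div (Nat.cast_pos.2 hD),
    Complex.ofReal_mul, Complex.ofReal_cpow (by positivity)]
  push_cast
  rw [← Complex.Gamma_ofReal, ← Complex.Gamma_ofReal]
  push_cast
  ring_nf

lemma Complex.continuousAt_Gamma_of_re_pos {s : ℂ} (hs : 0 < s.re) : ContinuousAt Gamma s :=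
  continuousAt_Gamma s fun m hm => by
    have := congrArg re hm
    simp only [neg_re, natCast_re] at this
    linarith [m.cast_nonneg (α := ℝ)]

noncomputable def massPrefactor (D : ℕ) (σ : ℂ) : ℂ :=
  (4 * (Real.pi : ℂ)) ^ (-(D : ℂ) / 2) *
    (Complex.Gamma (1 - σ) * Complex.Gamma (σ + D) / Complex.Gamma ((D : ℂ) / 2))

lemma neg_mul_mul_DeltaKG {D : ℕ} {F : ℂ → ℂ → ℂ} {σ : ℂ} (hσ : σ ≠ 0)
    (hσD : σ + (D : ℂ) - 1 ≠ 0) (z : ℂ) :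
    (-σ * (σ + (D : ℂ) - 1)) * DeltaKG D F σ z = massPrefactor D σ * F σ z := by
  have hleft : Complex.Gamma (1 - σ) = -σ * Complex.Gamma (-σ) := by
    rw [← Complex.Gamma_add_one _ (neg_ne_zero.2 hσ), neg_add_eq_sub]
  have hright : Complex.Gamma (σ + D) = (σ + D - 1) * Complex.Gamma (σ + D - 1) := by
    rw [← Complex.Gamma_add_one _ hσD, sub_add_cancel]
  rw [DeltaKG, massPrefactor, hleft, hright]
  ring

lemma massPrefactor_zero {D : ℕ} (hD : 0 < D) : massPrefactor D 0 = (((volS D)⁻¹ : ℝ) : ℂ) := by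
  rw [inv_volS_eq hD, massPrefactor, sub_zero, zero_add, Complex.Gamma_one, one_mul]

lemma continuousOn_massPrefactor {D : ℕ} (hD : 0 < D) :
    ContinuousOn (massPrefactor D) (Metric.ball 0 1) := by
  intro σ hσ
  have hre : |σ.re| < 1 :=
    (Complex.abs_re_le_norm σ).trans_lt (by simpa using hσ)
  obtain ⟨hre_lo, hre_hi⟩ := abs_lt.1 hre
  have hD' : (1 : ℝ) ≤ D := by exact_mod_cast hD
  have hleft : ContinuousAt (fun σ : ℂ => Complex.Gamma (1 - σ)) σ := by
    refine (Complex.continuousAt_Gamma_of_re_pos ?_).comp (by fun_prop)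
    rw [Complex.sub_re, Complex.one_re]
    linarith
  have hright : ContinuousAt (fun σ : ℂ => Complex.Gamma (σ + D)) σ := by
    refine (Complex.continuousAt_Gamma_of_re_pos ?_).comp (by fun_prop)
    rw [Complex.add_re, Complex.natCast_re]
    linarith
  exact (continuousAt_const.mul ((hleft.mul hright).div_const _)).continuousWithinAt

theorem ContinuousOn.tendstoUniformlyOn_of_isCompact {α β γ : Type*} [TopologicalSpace α]
    [TopologicalSpace β] [UniformSpace γ] {f : α → β → γ} {x : α} {U : Set α} {K : Set β}
    (hU : U ∈ 𝓝 x) (hK : IsCompact K) (hf : ContinuousOn ↿f (U ×ˢ K)) :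
    TendstoUniformlyOn f (f x) (𝓝 x) K := by
  intro u hu
  obtain ⟨v, hv, hvu⟩ := hK.mem_uniformity_of_prod hf (mem_of_mem_nhds hU) (symm_le_uniformity hu)
  rw [nhdsWithin_eq_nhds.2 hU] at hv
  filter_upwards [hv] with p hp z hz
  exact hvu p hp z hz

/-- With `M²(σ) = −σ(σ+D−1)`, as `σ → 0` one has `Δ_σ(Z) = 1/(M² vol(S^D)) + O(M⁰)`;
in particular `M²(σ)·Δ_σ(Z) → 1/vol(S^D)`, uniformly for `Z` in compact subsets of
`ℂ∖[1,∞)`.  `F` is characterized as the analytic continuation of the hypergeometric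
series: it agrees with the series on the unit disk of the argument `(1+Z)/2`, is
holomorphic in `Z` on the cut plane, and is jointly continuous. -/
theorem stmt5 (D : ℕ) (hD : 2 ≤ D) (F : ℂ → ℂ → ℂ)
    (hFser : ∀ σ z : ℂ, ‖(1 + z) / 2‖ < 1 →
      F σ z = hyperSeries (-σ) (σ + (D : ℂ) - 1) ((D : ℂ) / 2) ((1 + z) / 2))
    (hFz : ∀ σ : ℂ, DifferentiableOn ℂ (F σ) cutPlane)
    (hFcont : ContinuousOn (fun p : ℂ × ℂ => F p.1 p.2) ((Set.univ : Set ℂ) ×ˢ cutPlane)) :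
    ∀ K : Set ℂ, K ⊆ cutPlane → IsCompact K →
      TendstoUniformlyOn
        (fun σ z => (-σ * (σ + (D : ℂ) - 1)) * DeltaKG D F σ z)
        (fun _ => ((volS D : ℝ) : ℂ)⁻¹)
        (nhdsWithin (0 : ℂ) {(0 : ℂ)}ᶜ) K := by
  intro K hK hKc
  have hcont : ContinuousOn (fun p : ℂ × ℂ => massPrefactor D p.1 * F p.1 p.2)
      (Metric.ball 0 1 ×ˢ K) :=
    ((continuousOn_massPrefactor (by omega)).comp continuousOn_fst fun p hp => hp.1).mul
      (hFcont.mono fun p hp => ⟨trivial, hK hp.2⟩)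
  have hlim : TendstoUniformlyOn (fun σ z => massPrefactor D σ * F σ z)
      (fun _ => ((volS D : ℝ) : ℂ)⁻¹) (𝓝 0) K := by
    refine (hcont.tendstoUniformlyOn_of_isCompact (Metric.ball_mem_nhds 0 one_pos)
      hKc).congr_right fun z hz => ?_
    rw [eqOn_one_of_eq_hyperSeries_zero_left (hFz 0) (by simpa using hFser 0) (hK hz),
      Pi.one_apply, mul_one, massPrefactor_zero (by omega), Complex.ofReal_inv]
  have hpoles : ∀ᶠ σ in 𝓝[≠] (0 : ℂ), σ ≠ 0 ∧ σ + (D : ℂ) - 1 ≠ 0 := by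
    have hD1 : (0 : ℂ) + D - 1 ≠ 0 := by
      rw [zero_add, sub_ne_zero]; exact_mod_cast (by omega : D ≠ 1)
    exact eventually_mem_nhdsWithin.and (nhdsWithin_le_nhds
      ((by fun_prop : Continuous fun σ : ℂ => σ + D - 1).continuousAt.eventually_ne hD1))
  refine TendstoUniformlyOn.congr (fun u hu => (hlim u hu).filter_mono nhdsWithin_le_nhds) ?_
  filter_upwards [hpoles] with σ ⟨hσ, hσD⟩ z _
  exact (neg_mul_mul_DeltaKG hσ hσD z).symm
end

section
/- The operator P^{(β)}_{μν}φ := (∇_μ∇_ν + a_β g_{μν} + b_β g_{μν}□)φ with a_β = 2(1−D)/(2−βD), b_β = (β−2)/(2−βD), applied to any smooth scalar φ on unit-radius dS_D, produces a symmetric tensor h_{μν} = P^{(β)}_{μν}φ satisfying the generalized de Donder condition ∇^ν h_{μν} − (β/2)∇_μ h^ν{}_ν = 0, provided βD ≠ 2. -/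
/-! Taking the divergence and the trace of `h = ∇∇φ + a g φ + b g □φ` and commuting `∇^ν` past
`∇_μ∇_ν` turns the de Donder combination `∇^ν h_{μν} − (β/2)∇_μ h` into a combination of
`∇_μ□φ` and `∇_μφ` whose coefficients are affine in `a` and `b`, each with slope `(2 − βD)/2`;
`a_β` and `b_β` are exactly the values that make both coefficients vanish. -/

section DeDonder

variable {𝕜 S C T : Type*} [Field 𝕜] [AddCommGroup S] [Module 𝕜 S] [AddCommGroup C] [Module 𝕜 C]
  [AddCommGroup T] [Module 𝕜 T]

/-- `(∇_μ∇_ν + a g_{μν} + b g_{μν}□)φ`. -/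
def scalarProjector (Box : S →ₗ[𝕜] S) (Hess gMul : S →ₗ[𝕜] T) (a b : 𝕜) (φ : S) : T :=
  Hess φ + a • gMul φ + b • gMul (Box φ)

/-- `∇^ν h_{μν} − (β/2)∇_μ h^ν{}_ν`. -/
def deDonder (grad : S →ₗ[𝕜] C) (divg : T →ₗ[𝕜] C) (tr : T →ₗ[𝕜] S) (β : 𝕜) (h : T) : C :=
  divg h - (β / 2) • grad (tr h)

theorem deDonder_scalarProjector (D β a b : 𝕜) (Box : S →ₗ[𝕜] S) (grad : S →ₗ[𝕜] C)
    (Hess gMul : S →ₗ[𝕜] T) (divg : T →ₗ[𝕜] C) (tr : T →ₗ[𝕜] S)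
    (hdivHess : ∀ φ : S, divg (Hess φ) = grad (Box φ) + (D - 1) • grad φ)
    (hdivg : ∀ φ : S, divg (gMul φ) = grad φ)
    (htrHess : ∀ φ : S, tr (Hess φ) = Box φ)
    (htrg : ∀ φ : S, tr (gMul φ) = D • φ) (φ : S) :
    deDonder grad divg tr β (scalarProjector Box Hess gMul a b φ)
      = (1 - β / 2 + b * (1 - β * D / 2)) • grad (Box φ)
        + (D - 1 + a * (1 - β * D / 2)) • grad φ := by
  simp only [deDonder, scalarProjector, map_add, map_smul, hdivHess, hdivg, htrHess, htrg]
  match_scalars <;> ring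

end DeDonder

/-- The generalized de Donder projector `P^{(β)}_{μν}φ = (∇_μ∇_ν + a_β g_{μν} + b_β g_{μν}□)φ`
with `a_β = 2(1−D)/(2−βD)`, `b_β = (β−2)/(2−βD)` produces, for every smooth scalar `φ` on
unit-radius `dS_D`, a symmetric tensor satisfying the generalized de Donder condition
`∇^ν h_{μν} − (β/2)∇_μ h^ν{}_ν = 0`, provided `βD ≠ 2`.

The differential calculus on `dS_D` is abstracted: `S` = scalar fields, `C` = covector
fields, `T` = symmetric 2-tensor fields, with the ℝ-linear operators `Box = □`,
`grad = ∇_μ`, `Hess = ∇_μ∇_ν`, `gMul = g_{μν}·`, `divg = ∇^ν`, `tr = g^{μν}`,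
subject to the identities valid on unit-radius de Sitter space (`R_{μν} = (D−1)g_{μν}`):
`∇^ν∇_μ∇_νφ = ∇_μ□φ + (D−1)∇_μφ`, `∇^ν(g_{μν}φ) = ∇_μφ`, `g^{μν}∇_μ∇_νφ = □φ`,
`g^{μν}g_{μν}φ = Dφ`. -/
theorem stmt11 (D : ℕ) (β : ℝ) (hβ : β * D ≠ 2)
    {S C T : Type*} [AddCommGroup S] [Module ℝ S] [AddCommGroup C] [Module ℝ C]
    [AddCommGroup T] [Module ℝ T]
    (Box : S →ₗ[ℝ] S) (grad : S →ₗ[ℝ] C) (Hess gMul : S →ₗ[ℝ] T)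
    (divg : T →ₗ[ℝ] C) (tr : T →ₗ[ℝ] S)
    (hdivHess : ∀ φ : S, divg (Hess φ) = grad (Box φ) + ((D : ℝ) - 1) • grad φ)
    (hdivg : ∀ φ : S, divg (gMul φ) = grad φ)
    (htrHess : ∀ φ : S, tr (Hess φ) = Box φ)
    (htrg : ∀ φ : S, tr (gMul φ) = (D : ℝ) • φ)
    (φ : S) :
    divg (Hess φ + (2 * (1 - (D : ℝ)) / (2 - β * D)) • gMul φ
        + ((β - 2) / (2 - β * D)) • gMul (Box φ))
      - (β / 2) • grad (tr (Hess φ + (2 * (1 - (D : ℝ)) / (2 - β * D)) • gMul φ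
        + ((β - 2) / (2 - β * D)) • gMul (Box φ))) = 0 := by
  have hden : 2 - β * D ≠ 0 := sub_ne_zero.mpr hβ.symm
  have hhalf : 1 - β * D / 2 = (2 - β * D) / 2 := by ring
  have hBox : 1 - β / 2 + (β - 2) / (2 - β * D) * (1 - β * D / 2) = 0 := by
    rw [hhalf, div_mul_div_cancel₀ hden]; ring
  have hgrad : (D : ℝ) - 1 + 2 * (1 - D) / (2 - β * D) * (1 - β * D / 2) = 0 := by
    rw [hhalf, div_mul_div_cancel₀ hden]; ring
  change deDonder grad divg tr β
    (scalarProjector Box Hess gMul (2 * (1 - D) / (2 - β * D)) ((β - 2) / (2 - β * D)) φ) = 0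
  rw [deDonder_scalarProjector _ _ _ _ Box grad Hess gMul divg tr hdivHess hdivg htrHess htrg,
    hBox, hgrad, zero_smul, zero_smul, add_zero]
end
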